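/- There exist a nondeterministic automaton S and a deterministic automaton P over the same event set such that S is language (automata) controllable w.r.t. P but S is not FM-controllable w.r.t. P. (Concretely: S has transitions s1 →^c s2, s1 →^c s4, s2 →^u s3; P has p1 →^c p2 →^u p3 →^c p4, with c controllable and u uncontrollable.) -/
import Mathlib


namespace SCT

inductive Path {Q E : Type} (tr : Q → E → Q → Prop) : Q → List E → Q → Prop
  | nil (q : Q) : Path tr q [] q
  | cons {q q' q'' : Q} {a : E} {w : List E} :
      tr q a q' → Path tr q' w q'' → Path tr q (a :: w) q''

def CanDo {Q E : Type} (tr : Q → E → Q → Prop) (q : Q) (w : List E) : Prop :=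
  ∃ q', Path tr q w q'

def Lang {Q E : Type} (tr : Q → E → Q → Prop) (q0 : Q) : Set (List E) :=
  { w | CanDo tr q0 w }

/-- Language controllability of `K` w.r.t. `M`: `K·Σu ∩ M ⊆ K`. -/
def LangControllable {E : Type} (U : Set E) (K M : Set (List E)) : Prop :=
  ∀ w u, w ∈ K → u ∈ U → w ++ [u] ∈ M → w ++ [u] ∈ K

/-- Synchronous product transition relation. -/
def prodTr {Q1 Q2 E : Type} (t1 : Q1 → E → Q1 → Prop) (t2 : Q2 → E → Q2 → Prop) :
    Q1 × Q2 → E → Q1 × Q2 → Prop :=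
  fun p a p' => t1 p.1 a p'.1 ∧ t2 p.2 a p'.2

def Deterministic {Q E : Type} (tr : Q → E → Q → Prop) : Prop :=
  ∀ q a q' q'', tr q a q' → tr q a q'' → q' = q''

/-- Automata controllability of S w.r.t. P. -/
def AC {QS QP E : Type} (U : Set E) (tS : QS → E → QS → Prop) (s0 : QS)
    (tP : QP → E → QP → Prop) (p0 : QP) : Prop :=
  ∀ w u, u ∈ U → CanDo tP p0 (w ++ [u]) → CanDo tS s0 w → CanDo tS s0 (w ++ [u])

/-- FM-controllability of S w.r.t. P. -/
def FM {QS QP E : Type} (U : Set E) (tS : QS → E → QS → Prop) (s0 : QS)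
    (tP : QP → E → QP → Prop) (p0 : QP) : Prop :=
  ∀ w u q, u ∈ U → CanDo tP p0 (w ++ [u]) → Path tS s0 w q → ∃ q', tS q u q'

def Reach {Q E : Type} (tr : Q → E → Q → Prop) (q0 q : Q) : Prop :=
  ∃ w, Path tr q0 w q

/-- Σu-admissibility of S w.r.t. P (Kushi–Takai). -/
def KT {QS QP E : Type} (U : Set E) (tS : QS → E → QS → Prop) (s0 : QS)
    (tP : QP → E → QP → Prop) (p0 : QP) : Prop :=
  ∀ qS qP u, Reach (prodTr tS tP) (s0, p0) (qS, qP) → u ∈ U →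
    (∃ qP', tP qP u qP') → ∃ q', prodTr tS tP (qS, qP) u q'

/-- Control relation (for deterministic automata). -/
def ControlRel {QS QP E : Type} (U : Set E) (tS : QS → E → QS → Prop)
    (tP : QP → E → QP → Prop) (R : QS → QP → Prop) : Prop :=
  ∀ qS qP, R qS qP →
    (∀ a qS' qP', tS qS a qS' → tP qP a qP' → R qS' qP') ∧
    (∀ u, u ∈ U → (∃ qP', tP qP u qP') →
      (∃ qS', tS qS u qS') ∧ ∀ qS' qP', tS qS u qS' → tP qP u qP' → R qS' qP')

/-- Partial bisimulation (deterministic version). -/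
def PB {QS QP E : Type} (U : Set E) (tS : QS → E → QS → Prop)
    (tP : QP → E → QP → Prop) (R : QS → QP → Prop) : Prop :=
  ∀ qS qP, R qS qP →
    (∀ a, (∃ qS', tS qS a qS') →
      (∃ qP', tP qP a qP') ∧ ∀ qS' qP', tS qS a qS' → tP qP a qP' → R qS' qP') ∧
    (∀ u, u ∈ U → (∃ qP', tP qP u qP') →
      (∃ qS', tS qS u qS') ∧ ∀ qS' qP', tS qS u qS' → tP qP u qP' → R qS' qP')

/-- Nondeterministic partial bisimulation. -/
def NPB {QS QP E : Type} (U : Set E) (tS : QS → E → QS → Prop)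
    (tP : QP → E → QP → Prop) (R : QS → QP → Prop) : Prop :=
  ∀ qS qP, R qS qP →
    (∀ a qS', tS qS a qS' → ∃ qP', tP qP a qP' ∧ R qS' qP') ∧
    (∀ u qP', u ∈ U → tP qP u qP' → ∃ qS', tS qS u qS' ∧ R qS' qP')

/-- State controllability (via an embedding `f`); `Σc = Uᶜ`. -/
def SC {QS QP E : Type} (U : Set E) (tS : QS → E → QS → Prop) (s0 : QS)
    (tP : QP → E → QP → Prop) (p0 : QP) : Prop :=
  ∃ f : QS → QP, f s0 = p0 ∧
    (∀ q q' a, tS q a q' → tP (f q) a (f q')) ∧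
    (∀ q a, ¬ (∃ q', tS q a q') → (∃ p', tP (f q) a p') → a ∉ U)

/-- S is a subautomaton of P (both modelled over the same state type). -/
def Sub {Q E : Type} (tS tP : Q → E → Q → Prop) (s0 p0 : Q) : Prop :=
  (∀ q a q', tS q a q' → tP q a q') ∧ s0 = p0

/-- FM⊆-controllability of a subautomaton S w.r.t. P. -/
def FMsub {Q E : Type} (U : Set E) (tS : Q → E → Q → Prop) (s0 : Q)
    (tP : Q → E → Q → Prop) (p0 : Q) : Prop :=
  ∀ w u q q', u ∈ U → Path tP p0 w q → tP q u q' → Path tS s0 w q → tS q u q'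

/-- Nondeterministic state controllability (Zhou et al.). -/
def SCn {QS QP E : Type} (U : Set E) (tS : QS → E → QS → Prop) (s0 : QS)
    (tP : QP → E → QP → Prop) (p0 : QP) : Prop :=
  ∀ w u, w ∈ Lang tS s0 → u ∈ U → w ++ [u] ∈ Lang tP p0 →
    ∀ q, Path tS s0 w q → ∃ q', tS q u q'


inductive QSx : Type | s1 | s2 | s3 | s4
deriving DecidableEq
inductive QPx : Type | p1 | p2 | p3 | p4
deriving DecidableEq

def tSx : QSx → Bool → QSx → Prop := fun q a q' =>
  (q = .s1 ∧ a = true ∧ (q' = .s2 ∨ q' = .s4)) ∨ (q = .s2 ∧ a = false ∧ q' = .s3)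

def tPx : QPx → Bool → QPx → Prop := fun q a q' =>
  (q = .p1 ∧ a = true ∧ q' = .p2) ∨ (q = .p2 ∧ a = false ∧ q' = .p3) ∨
  (q = .p3 ∧ a = true ∧ q' = .p4)

lemma pStep : ∀ q a q', tPx q a q' →
    (q = .p1 ∧ a = true ∧ q' = .p2) ∨ (q = .p2 ∧ a = false ∧ q' = .p3) ∨
    (q = .p3 ∧ a = true ∧ q' = .p4) := fun _ _ _ h => h

lemma p4dead : ∀ (l : List Bool) (q : QPx), Path tPx .p4 l q → l = [] := by
  intro l q h
  rcases h with _ | ⟨h1, _⟩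
  · rfl
  · rcases pStep _ _ _ h1 with ⟨h,_⟩|⟨h,_⟩|⟨h,_⟩ <;> simp_all

lemma pLang : ∀ w : List Bool, CanDo tPx .p1 (w ++ [false]) → w = [true] := by
  rintro (_|⟨a,(_|⟨b,(_|⟨c,w⟩)⟩)⟩) ⟨q, hp⟩
  · rcases hp with _ | ⟨h1, _⟩
    rcases pStep _ _ _ h1 with ⟨_,h,_⟩|⟨h,_⟩|⟨h,_⟩ <;> simp_all
  · rcases hp with _ | ⟨h1, h2⟩
    rcases pStep _ _ _ h1 with ⟨_,ha,hq⟩|⟨h,_⟩|⟨h,_⟩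
    · subst ha; rfl
    · simp_all
    · simp_all
  · rcases hp with _ | ⟨h1, h2⟩
    rcases pStep _ _ _ h1 with ⟨_,ha,hq⟩|⟨h,_⟩|⟨h,_⟩
    · subst hq
      rcases h2 with _ | ⟨h1, h2⟩
      rcases pStep _ _ _ h1 with ⟨h,_⟩|⟨_,hb,hq⟩|⟨h,_⟩
      · simp_all
      · subst hq
        rcases h2 with _ | ⟨h1, _⟩
        rcases pStep _ _ _ h1 with ⟨h,_⟩|⟨h,_⟩|⟨_,h,_⟩ <;> simp_all
      · simp_all
    · simp_all
    · simp_all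
  · rcases hp with _ | ⟨h1, h2⟩
    rcases pStep _ _ _ h1 with ⟨_,ha,hq⟩|⟨h,_⟩|⟨h,_⟩
    · subst hq
      rcases h2 with _ | ⟨h1, h2⟩
      rcases pStep _ _ _ h1 with ⟨h,_⟩|⟨_,hb,hq⟩|⟨h,_⟩
      · simp_all
      · subst hq
        rcases h2 with _ | ⟨h1, h2⟩
        rcases pStep _ _ _ h1 with ⟨h,_⟩|⟨h,_⟩|⟨_,_,hq⟩
        · simp_all
        · simp_all
        · subst hq
          have := p4dead _ _ h2
          simp_all
      · simp_all
    · simp_all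
    · simp_all

theorem stmt5 : ∃ (QS QP E : Type) (U : Set E) (tS : QS → E → QS → Prop) (s0 : QS)
    (tP : QP → E → QP → Prop) (p0 : QP),
    Deterministic tP ∧ AC U tS s0 tP p0 ∧ ¬ FM U tS s0 tP p0 := by
  refine ⟨QSx, QPx, Bool, {false}, tSx, .s1, tPx, .p1, ?_, ?_, ?_⟩
  · intro q a q' q'' h1 h2
    rcases h1 with ⟨hq,ha,h⟩|⟨hq,ha,h⟩|⟨hq,ha,h⟩ <;>
      rcases h2 with ⟨hq2,ha2,h2⟩|⟨hq2,ha2,h2⟩|⟨hq2,ha2,h2⟩ <;> simp_all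
  · intro w u hu hP hS
    simp only [Set.mem_singleton_iff] at hu
    subst hu
    have hw := pLang w hP
    subst hw
    exact ⟨.s3, .cons (Or.inl ⟨rfl, rfl, Or.inl rfl⟩)
      (.cons (Or.inr ⟨rfl, rfl, rfl⟩) (.nil _))⟩
  · intro hfm
    have := hfm [true] false .s4 rfl
      ⟨.p3, .cons (Or.inl ⟨rfl,rfl,rfl⟩) (.cons (Or.inr (Or.inl ⟨rfl,rfl,rfl⟩))
        (.nil _))⟩
      (.cons (Or.inl ⟨rfl, rfl, Or.inr rfl⟩) (.nil _))
    rcases this with ⟨q', hq'⟩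
    rcases hq' with ⟨h,_⟩|⟨h,_⟩ <;> simp_all


end SCT
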